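/- Let A, B be positive bounded operators on a Hilbert space H and suppose S = R(B) is closed. Then R([S](A+B)) = S and N([S](A+B)) = S^⊥. -/

import Mathlib

open ContinuousLinearMap

/-- `T` is the Krein shorted operator `[S]A`: the Löwner-maximum of
`{X ∈ L(H)⁺ : X ≤ A, R(X) ⊆ S}`. -/
def IsShorted {E : Type*} [NormedAddCommGroup E] [InnerProductSpace ℂ E] [CompleteSpace E]
    (S : Submodule ℂ E) (A T : E →L[ℂ] E) : Prop :=
  T.IsPositive ∧ (A - T).IsPositive ∧ LinearMap.range (T : E →ₗ[ℂ] E) ≤ S ∧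
    ∀ X : E →L[ℂ] E, X.IsPositive → (A - X).IsPositive → LinearMap.range (X : E →ₗ[ℂ] E) ≤ S →
      (T - X).IsPositive

variable {H : Type*} [NormedAddCommGroup H] [InnerProductSpace ℂ H] [CompleteSpace H]

/-!
Maximality of `T = [S](A+B)` tested against `X = B` gives `B ≤ T`. If `T x = 0` then
`⟪B x, x⟫ = 0`, hence `B x = 0` by Cauchy–Schwarz for the form `⟪B ·, ·⟫`; so
`N(T) ⊆ N(B) = S^⊥`, while `S^⊥ ⊆ R(T)^⊥ = N(T)` because `R(T) ⊆ S`.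
As `S = R(B)` is closed, the open mapping theorem together with the same Cauchy–Schwarz inequality
makes `⟪B ·, ·⟫` coercive on `S`, hence so is `⟪T ·, ·⟫ ≥ ⟪B ·, ·⟫`. The compression of `T` to
`S` is then invertible, which gives `S ⊆ R(T)`.
-/

open RCLike NNReal
open scoped InnerProductSpace

namespace ContinuousLinearMap

variable {𝕜 E : Type*} [RCLike 𝕜] [NormedAddCommGroup E] [InnerProductSpace 𝕜 E]

theorem IsPositive.norm_inner_sq_le {P : E →L[𝕜] E} (hP : P.IsPositive) (x y : E) :
    ‖⟪P x, y⟫_𝕜‖ ^ 2 ≤ re ⟪P x, x⟫_𝕜 * re ⟪P y, y⟫_𝕜 := by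
  let c : PreInnerProductSpace.Core 𝕜 E :=
  { inner := fun a b => ⟪P a, b⟫_𝕜
    conj_inner_symm := fun a b => by rw [inner_conj_symm, hP.inner_left_eq_inner_right]
    re_inner_nonneg := hP.re_inner_nonneg_left
    add_left := fun a b z => by simp only [map_add, inner_add_left]
    smul_left := fun a b r => by simp only [map_smul, inner_smul_left] }
  have hsymm : ‖⟪P y, x⟫_𝕜‖ = ‖⟪P x, y⟫_𝕜‖ := by
    rw [← inner_conj_symm, hP.inner_left_eq_inner_right, norm_conj]
  calc ‖⟪P x, y⟫_𝕜‖ ^ 2 = ‖⟪P x, y⟫_𝕜‖ * ‖⟪P y, x⟫_𝕜‖ := by rw [sq, hsymm]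
    _ ≤ re ⟪P x, x⟫_𝕜 * re ⟪P y, y⟫_𝕜 := InnerProductSpace.Core.inner_mul_inner_self_le (c := c) x y

theorem IsPositive.apply_eq_zero_of_re_inner_eq_zero {P : E →L[𝕜] E} (hP : P.IsPositive) {x : E}
    (hx : re ⟪P x, x⟫_𝕜 = 0) : P x = 0 := by
  have h := hP.norm_inner_sq_le x (P x)
  rw [hx, zero_mul] at h
  simpa using h

theorem re_inner_le_of_isPositive_sub {B T : E →L[𝕜] E} (hTB : (T - B).IsPositive) (x : E) :
    re ⟪B x, x⟫_𝕜 ≤ re ⟪T x, x⟫_𝕜 := by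
  simpa [inner_sub_left] using hTB.re_inner_nonneg_left x

theorem ker_le_ker_of_isPositive_sub {B T : E →L[𝕜] E} (hB : B.IsPositive)
    (hTB : (T - B).IsPositive) : T.ker ≤ B.ker := fun x hx => by
  refine hB.apply_eq_zero_of_re_inner_eq_zero (le_antisymm ?_ (hB.re_inner_nonneg_left x))
  simpa [show T x = 0 from hx] using re_inner_le_of_isPositive_sub hTB x

theorem IsPositive.exists_norm_sq_mul_le_re_inner_of_isClosed_range [CompleteSpace E]
    {B : E →L[𝕜] E} (hB : B.IsPositive) (hclosed : IsClosed (B.range : Set E)) :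
    ∃ c : ℝ≥0, 0 < c ∧ ∀ y ∈ B.range, ‖y‖ ^ 2 * c ≤ re ⟪B y, y⟫_𝕜 := by
  have : CompleteSpace B.range := hclosed.completeSpace_coe
  obtain ⟨C, hC, hpre⟩ := B.rangeRestrict.exists_preimage_norm_le
    (LinearMap.range_eq_top.mp (LinearMap.range_rangeRestrict _))
  lift C to ℝ≥0 using hC.le
  refine ⟨C⁻¹, inv_pos.mpr (mod_cast hC), fun y hy => ?_⟩
  obtain ⟨x, hxy, hx : ‖x‖ ≤ C * ‖y‖⟩ := hpre ⟨y, hy⟩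
  replace hxy : B x = y := congrArg Subtype.val hxy
  have hBx : re ⟪B x, x⟫_𝕜 ≤ C * ‖y‖ ^ 2 := calc
    re ⟪B x, x⟫_𝕜 ≤ ‖y‖ * ‖x‖ := hxy ▸ re_inner_le_norm _ _
    _ ≤ ‖y‖ * (C * ‖y‖) := by gcongr
    _ = C * ‖y‖ ^ 2 := by ring
  have hcs : ‖y‖ ^ 2 * ‖y‖ ^ 2 ≤ ‖y‖ ^ 2 * (C * re ⟪B y, y⟫_𝕜) := calc
    ‖y‖ ^ 2 * ‖y‖ ^ 2 = ‖⟪B x, y⟫_𝕜‖ ^ 2 := by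
      rw [hxy, inner_self_eq_norm_sq_to_K, norm_pow, RCLike.norm_ofReal, abs_norm]; ring
    _ ≤ re ⟪B x, x⟫_𝕜 * re ⟪B y, y⟫_𝕜 := hB.norm_inner_sq_le x y
    _ ≤ C * ‖y‖ ^ 2 * re ⟪B y, y⟫_𝕜 := by gcongr; exact hB.re_inner_nonneg_left y
    _ = ‖y‖ ^ 2 * (C * re ⟪B y, y⟫_𝕜) := by ring
  rcases eq_or_ne y 0 with rfl | hy0
  · simp
  · rw [NNReal.coe_inv, ← div_eq_mul_inv, div_le_iff₀ (mod_cast hC), mul_comm]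
    exact le_of_mul_le_mul_left hcs (by positivity)

theorem le_range_of_forall_le_norm_inner_map {T : E →L[𝕜] E} {S : Submodule 𝕜 E}
    [CompleteSpace S] (hTS : T.range ≤ S) {c : ℝ≥0} (hc : 0 < c)
    (hcoer : ∀ x ∈ S, ‖x‖ ^ 2 * c ≤ ‖⟪T x, x⟫_𝕜‖) : S ≤ T.range := by
  let TS : S →L[𝕜] S := (T ∘L S.subtypeL).codRestrict S fun x => hTS ⟨x, rfl⟩
  have hsurj : Function.Surjective TS :=
    (isUnit_iff_bijective.mp (isUnit_of_forall_le_norm_inner_map TS hc fun x => hcoer x x.2)).2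
  intro y hy
  obtain ⟨x, hx⟩ := hsurj ⟨y, hy⟩
  exact ⟨x, congrArg Subtype.val hx⟩

end ContinuousLinearMap

theorem shorted_range_ker_of_closed (A B : H →L[ℂ] H) (hA : A.IsPositive) (hB : B.IsPositive)
    (hRB : IsClosed ((LinearMap.range (B : H →ₗ[ℂ] H) : Submodule ℂ H) : Set H))
    (T : H →L[ℂ] H) (hT : IsShorted (LinearMap.range (B : H →ₗ[ℂ] H)) (A + B) T) :
    LinearMap.range (T : H →ₗ[ℂ] H) = LinearMap.range (B : H →ₗ[ℂ] H) ∧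
      LinearMap.ker (T : H →ₗ[ℂ] H) = (LinearMap.range (B : H →ₗ[ℂ] H))ᗮ := by
  obtain ⟨hT, -, hTS, hmax⟩ := hT
  have hTB : (T - B).IsPositive := hmax B hB (by simpa using hA) le_rfl
  have : CompleteSpace B.range := hRB.completeSpace_coe
  obtain ⟨c, hc, hcoer⟩ := hB.exists_norm_sq_mul_le_re_inner_of_isClosed_range hRB
  refine ⟨le_antisymm hTS (le_range_of_forall_le_norm_inner_map hTS hc fun x hx => ?_),
    le_antisymm ?_ ?_⟩
  · calc ‖x‖ ^ 2 * c ≤ re ⟪B x, x⟫_ℂ := hcoer x hx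
      _ ≤ re ⟪T x, x⟫_ℂ := re_inner_le_of_isPositive_sub hTB x
      _ ≤ ‖⟪T x, x⟫_ℂ‖ := re_le_norm _
  · exact hB.isSymmetric.orthogonal_range ▸ ker_le_ker_of_isPositive_sub hB hTB
  · exact hT.isSymmetric.orthogonal_range ▸ Submodule.orthogonal_le hTS
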